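/- For all y₁,…,y₇ ∈ ℂ, set y₈ := −(y₁+⋯+y₇) and define e₁ = −2y₁−y₂−3y₃−3y₄−y₅−y₆−y₇, e₂ = −2y₂−y₁−3y₃−3y₄−y₅−y₆−y₇, e₃ = −2y₃−y₄−y₅−y₆−y₇, e₄ = −2y₄−y₃−y₅−y₆−y₇, e₅ = −y₁−y₂−y₃−y₄−y₆−y₇, e₆ = −y₁−y₂−y₃−y₄−y₇−y₅, e₀ = −2y₁−2y₂−4y₃−4y₄−2y₅−2y₆−2y₇. Then hA₀₀(e₀,e₁,…,e₆) = −(y₁³+y₂³+⋯+y₈³)/6. -/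

import Mathlib

/-- The homogenization hA₀₀ of the accessory-parameter polynomial A₀₀ of the equation E₃. -/
noncomputable def hA00 (e0 e1 e2 e3 e4 e5 e6 : ℂ) : ℂ :=
  let e7 := 3*e0 - (e1 + e2 + e3 + e4 + e5 + e6)
  (-4*(e1 + e2 - e3 - e4)^3 - 27*e5*e6*e7
    + 9*(e1 + e2 - e3 - e4)*(e5*e6 + e5*e7 + e6*e7 - 2*e0^2)
    + 9*e1*e2*(e1 + e2 - e0) + 18*(e1 + e2 - e0)*(e3^2 + e3*e4 + e4^2)
    - 9*e3*e4*(e3 + e4 - e0) - 18*(e3 + e4 - e0)*(e1^2 + e1*e2 + e2^2)) / 54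

theorem hA00_eq_neg_F8_div_6 (y1 y2 y3 y4 y5 y6 y7 : ℂ)
    (y8 e0 e1 e2 e3 e4 e5 e6 : ℂ)
    (hy8 : y8 = -(y1 + y2 + y3 + y4 + y5 + y6 + y7))
    (he1 : e1 = -2*y1 - y2 - 3*y3 - 3*y4 - y5 - y6 - y7)
    (he2 : e2 = -2*y2 - y1 - 3*y3 - 3*y4 - y5 - y6 - y7)
    (he3 : e3 = -2*y3 - y4 - y5 - y6 - y7)
    (he4 : e4 = -2*y4 - y3 - y5 - y6 - y7)
    (he5 : e5 = -y1 - y2 - y3 - y4 - y6 - y7)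
    (he6 : e6 = -y1 - y2 - y3 - y4 - y7 - y5)
    (he0 : e0 = -2*y1 - 2*y2 - 4*y3 - 4*y4 - 2*y5 - 2*y6 - 2*y7) :
    hA00 e0 e1 e2 e3 e4 e5 e6
      = -(y1^3 + y2^3 + y3^3 + y4^3 + y5^3 + y6^3 + y7^3 + y8^3)/6 := by
  subst hy8 he1 he2 he3 he4 he5 he6 he0
  unfold hA00
  ring
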